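/- There exists a constant β_θ > 0, depending only on βmax, l and T, such that for every initial output y₀ ∈ ℝ and every two triples (u, w, δ) and (u', w', δ') of input sequences u, u' ∈ ℝ^T, disturbance sequences w, w' ∈ ℝ^T, and initial shifts δ, δ' ∈ ℝ, with corresponding outputs y and y' generated by system (29), there exist real numbers θ_t(ξ) (0 ≤ ξ ≤ t ≤ T−1), υ_t(ξ) (0 ≤ ξ ≤ t−1 ≤ T−2), and ϑ_t (0 ≤ t ≤ T−1) such that for every t ∈ {0,…,T−1}: y(t+1) − y'(t+1) = Σ_{ξ=0}^{t} θ_t(ξ)·(u(ξ) − u'(ξ)) + (w(t) − w'(t)) + Σ_{ξ=0}^{t−1} υ_t(ξ)·(w(ξ) − w'(ξ)) + ϑ_t·(δ − δ'), with |θ_t(ξ)| ≤ β_θ, θ_t(t) ∈ [βmin, βmax], |υ_t(ξ)| ≤ β_θ, and |ϑ_t| ≤ β_θ. -/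

import Mathlib

/-!
Along the segment between the two argument vectors, the mean value theorem turns the output
difference `Δy = y - y'` into the solution of a linear lag recursion
`Δy (t+1) = ∑_{j ≤ l} a t j Δy (t-j) + ∑_{ξ ≤ t} b t ξ Δu ξ + Δw t`, `Δy 0 = δ - δ'`,
whose coefficients are partial derivatives of `f (·, t)`; in particular `b t t = ∂f/∂x_{l+2}`.
By superposition, `Δy (t+1)` is a linear combination of the `Δu ξ`, `Δw ξ` and `δ - δ'` whose
coefficients are the responses of the recursion to unit impulses. Causality makes the combination
triangular with leading coefficients `b t t` and `1`, and a response can grow at most by the factor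
`(l+1) βmax + 1` per step.
-/

/-- The argument vector `(y(t),…,y(t−l), u(t),…,u(t−n))` fed to the nonlinearity of
the system, with the conventions `y(i) = 0` and `u(i) = 0` for `i < 0`. -/
def sysArg (l n : ℕ) (y u : ℕ → ℝ) (t : ℕ) : Fin (l + n + 2) → ℝ :=
  fun j =>
    if (j : ℕ) ≤ l then (if (j : ℕ) ≤ t then y (t - (j : ℕ)) else 0)
    else (if (j : ℕ) - (l + 1) ≤ t then u (t - ((j : ℕ) - (l + 1))) else 0)

/-- `y` is the output trajectory of system (29) generated by the nonlinearity `f`,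
initial output `y₀`, initial shift `δ`, input sequence `u` and disturbance `w`. -/
def IsTrajW (l n T : ℕ) (f : (Fin (l + n + 2) → ℝ) → ℕ → ℝ) (y₀ δ : ℝ)
    (u w y : ℕ → ℝ) : Prop :=
  y 0 = y₀ + δ ∧ ∀ t, t < T → y (t + 1) = f (sysArg l n y u t) t + w t

open Finset

theorem exists_sub_eq_sum_fderiv_mul {ι : Type*} [Fintype ι] [DecidableEq ι]
    {f : (ι → ℝ) → ℝ} (hf : Differentiable ℝ f) (x y : ι → ℝ) :
    ∃ c, f x - f y = ∑ i, fderiv ℝ f c (Pi.single i 1) * (x i - y i) := by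
  obtain ⟨c, -, hc⟩ := domain_mvt (fun z _ => (hf z).hasFDerivAt.hasFDerivWithinAt)
    convex_univ (Set.mem_univ y) (Set.mem_univ x)
  refine ⟨c, ?_⟩
  rw [hc]
  conv_lhs => rw [pi_eq_sum_univ' (x - y), map_sum]
  simp [mul_comm]

theorem eq_of_lag_recursion {L N : ℕ} {a : ℕ → ℕ → ℝ} {g X Z : ℕ → ℝ} (h0 : X 0 = Z 0)
    (hX : ∀ t < N, X (t + 1) = ∑ j ∈ range (L + 1), a t j * X (t - j) + g t)
    (hZ : ∀ t < N, Z (t + 1) = ∑ j ∈ range (L + 1), a t j * Z (t - j) + g t) :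
    ∀ m ≤ N, X m = Z m := by
  intro m
  induction m using Nat.strong_induction_on with
  | _ m ih =>
    intro hm
    cases m with
    | zero => exact h0
    | succ t =>
      rw [hX t hm, hZ t hm]
      congr 1
      exact sum_congr rfl fun j _ => by rw [ih (t - j) (by omega) (by omega)]

-- `t - j` truncates at `0`: callers encode the convention `x i = 0` for `i < 0` by taking
-- `a t j = 0` for `j > t`.
def lagRec (L : ℕ) (a : ℕ → ℕ → ℝ) (g : ℕ → ℝ) (c : ℝ) : ℕ → ℝ
  | 0 => c
  | t + 1 => ∑ j ∈ range (L + 1), a t j * lagRec L a g c (t - j) + g t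

namespace lagRec

variable {L N : ℕ} {a : ℕ → ℕ → ℝ} {g : ℕ → ℝ} {c : ℝ}

@[simp] theorem zero : lagRec L a g c 0 = c := by rw [lagRec]

theorem succ (t : ℕ) :
    lagRec L a g c (t + 1) = ∑ j ∈ range (L + 1), a t j * lagRec L a g c (t - j) + g t := by
  rw [lagRec]

theorem eq_zero_of_forcing_eq_zero {k : ℕ} (hg : ∀ t < k, g t = 0) :
    ∀ m ≤ k, lagRec L a g 0 m = 0 := by
  intro m
  induction m using Nat.strong_induction_on with
  | _ m ih =>
    intro hm
    cases m with
    | zero => exact zero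
    | succ t =>
      rw [succ, hg t hm, add_zero]
      exact sum_eq_zero fun j _ => by rw [ih (t - j) (by omega) (by omega), mul_zero]

theorem succ_eq_forcing {k : ℕ} (hg : ∀ t < k, g t = 0) : lagRec L a g 0 (k + 1) = g k := by
  rw [succ, sum_eq_zero fun j _ => by
    rw [eq_zero_of_forcing_eq_zero hg (k - j) (by omega), mul_zero], zero_add]

theorem abs_le {α M : ℝ} (hα : 0 ≤ α) (ha : ∀ t < N, ∀ j ≤ L, |a t j| ≤ α)
    (hg : ∀ t < N, |g t| ≤ M) (hc : |c| ≤ M) :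
    ∀ m ≤ N, |lagRec L a g c m| ≤ M * (((L : ℝ) + 1) * α + 1) ^ m := by
  set K := ((L : ℝ) + 1) * α + 1
  have hM : 0 ≤ M := (abs_nonneg c).trans hc
  have hK : 1 ≤ K := by simp only [K]; nlinarith
  intro m
  induction m using Nat.strong_induction_on with
  | _ m ih =>
    intro hm
    cases m with
    | zero => simpa using hc
    | succ t =>
      have hterm : ∀ j ∈ range (L + 1), |a t j * lagRec L a g c (t - j)| ≤ α * (M * K ^ t) :=
        fun j hj => by
          rw [abs_mul]
          exact mul_le_mul (ha t hm j (by simpa [Nat.lt_succ_iff] using hj))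
            ((ih (t - j) (by omega) (by omega)).trans
              (mul_le_mul_of_nonneg_left (pow_le_pow_right₀ hK (by omega)) hM))
            (abs_nonneg _) hα
      calc |lagRec L a g c (t + 1)|
          ≤ ∑ j ∈ range (L + 1), |a t j * lagRec L a g c (t - j)| + |g t| := by
            rw [succ]; exact (abs_add_le _ _).trans (by gcongr; exact abs_sum_le_sum_abs _ _)
        _ ≤ ((L : ℝ) + 1) * (α * (M * K ^ t)) + M * K ^ t := by
            gcongr
            · simpa using sum_le_sum hterm
            · exact (hg t hm).trans (le_mul_of_one_le_right hM (one_le_pow₀ hK))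
        _ = M * K ^ (t + 1) := by simp only [K]; ring

theorem superposition {b : ℕ → ℕ → ℝ} {X U W : ℕ → ℝ} {D : ℝ} (h0 : X 0 = D)
    (hX : ∀ t < N, X (t + 1) = ∑ j ∈ range (L + 1), a t j * X (t - j)
      + (∑ ξ ∈ range N, b t ξ * U ξ + W t)) :
    ∀ m ≤ N, X m = ∑ ξ ∈ range N, lagRec L a (b · ξ) 0 m * U ξ
      + ∑ ξ ∈ range N, lagRec L a (fun s => if s = ξ then 1 else 0) 0 m * W ξ
      + lagRec L a 0 1 m * D := by
  refine eq_of_lag_recursion (by simp [h0]) hX fun t ht => ?_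
  have hW : W t = ∑ ξ ∈ range N, (if t = ξ then 1 else 0) * W ξ := by
    simp [ht]
  simp only [succ, add_mul, sum_add_distrib, Pi.zero_apply, add_zero, hW, sum_mul, mul_add, mul_sum]
  rw [sum_comm (s := range N), sum_comm (s := range N) (t := range (L + 1))]
  simp only [mul_assoc]
  ring

theorem succ_superposition_of_causal {b : ℕ → ℕ → ℝ} {X U W : ℕ → ℝ} {D : ℝ} {t : ℕ}
    (h0 : X 0 = D)
    (hX : ∀ t < N, X (t + 1) = ∑ j ∈ range (L + 1), a t j * X (t - j)
      + (∑ ξ ∈ range N, b t ξ * U ξ + W t))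
    (hb : ∀ t ξ, t < ξ → b t ξ = 0) (ht : t < N) :
    X (t + 1) = ∑ ξ ∈ range (t + 1), lagRec L a (b · ξ) 0 (t + 1) * U ξ + W t
      + ∑ ξ ∈ range t, lagRec L a (fun s => if s = ξ then 1 else 0) 0 (t + 1) * W ξ
      + lagRec L a 0 1 (t + 1) * D := by
  have hsub : range (t + 1) ⊆ range N := range_subset_range.2 ht
  have hcausal : ∀ {G : ℕ → ℕ → ℝ}, (∀ s ξ, s < ξ → G s ξ = 0) → ∀ V : ℕ → ℝ,
      ∑ ξ ∈ range N, lagRec L a (G · ξ) 0 (t + 1) * V ξ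
        = ∑ ξ ∈ range (t + 1), lagRec L a (G · ξ) 0 (t + 1) * V ξ := fun hG V =>
    (sum_subset hsub fun ξ _ hξ => by
      rw [eq_zero_of_forcing_eq_zero (fun s hs => hG s ξ hs) (t + 1)
        (by simpa using hξ), zero_mul]).symm
  have himpulse : lagRec L a (fun s => if s = t then 1 else 0) 0 (t + 1) = 1 := by
    rw [succ_eq_forcing fun s hs => if_neg hs.ne, if_pos rfl]
  rw [superposition h0 hX (t + 1) ht, hcausal hb,
    hcausal (G := fun s ξ => if s = ξ then 1 else 0) (fun s ξ h => if_neg h.ne),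
    sum_range_succ (fun ξ => lagRec L a (fun s => if s = ξ then 1 else 0) 0 (t + 1) * W ξ),
    himpulse]
  ring

end lagRec

theorem sum_lag_eq_sum_range (h U : ℕ → ℝ) {n t N : ℕ} (ht : t < N) :
    ∑ k ∈ range (n + 1), h k * (if k ≤ t then U (t - k) else 0)
      = ∑ ξ ∈ range N, (if ξ ≤ t ∧ t - ξ ≤ n then h (t - ξ) else 0) * U ξ := by
  simp only [mul_ite, ite_mul, mul_zero, zero_mul, ← sum_filter]
  refine sum_nbij' (t - ·) (t - ·) ?_ ?_ ?_ ?_ ?_ <;> intro k hk <;>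
    simp only [mem_filter, mem_range] at hk
  · simp only [mem_filter, mem_range]; omega
  · simp only [mem_filter, mem_range]; omega
  · omega
  · omega
  · rw [Nat.sub_sub_self hk.2]

theorem sysArg_sub (l n : ℕ) (y y' u u' : ℕ → ℝ) (t : ℕ) :
    sysArg l n y u t - sysArg l n y' u' t = sysArg l n (y - y') (u - u') t := by
  ext j
  simp only [sysArg, Pi.sub_apply]
  split_ifs <;> ring

theorem sum_mul_sysArg (l n : ℕ) (p Y U : ℕ → ℝ) {t N : ℕ} (ht : t < N) :
    ∑ j : Fin (l + n + 2), p j * sysArg l n Y U t j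
      = ∑ j ∈ range (l + 1), (if j ≤ t then p j else 0) * Y (t - j)
        + ∑ ξ ∈ range N, (if ξ ≤ t ∧ t - ξ ≤ n then p (l + 1 + (t - ξ)) else 0) * U ξ := by
  simp only [sysArg]
  rw [Fin.sum_univ_eq_sum_range (fun j => p j * if j ≤ l then (if j ≤ t then Y (t - j) else 0)
      else if j - (l + 1) ≤ t then U (t - (j - (l + 1))) else 0),
    show l + n + 2 = (l + 1) + (n + 1) by omega, sum_range_add,
    ← sum_lag_eq_sum_range (p <| l + 1 + ·) U ht]
  congr 1 <;> refine sum_congr rfl fun j hj => ?_ <;> rw [mem_range] at hj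
  · rw [if_pos (show j ≤ l by omega)]
    split_ifs <;> simp
  · rw [if_neg (show ¬ l + 1 + j ≤ l by omega), show l + 1 + j - (l + 1) = j by omega]

theorem IsTrajW.exists_lag_recursion {l n T : ℕ} {f : (Fin (l + n + 2) → ℝ) → ℕ → ℝ}
    {βmin βmax y₀ δ δ' : ℝ} {u u' w w' y y' : ℕ → ℝ} {i₀ : Fin (l + n + 2)} (hi₀ : (i₀ : ℕ) = l + 1)
    (hβ : 0 ≤ βmax)
    (hf : ∀ t < T, Differentiable ℝ fun x => f x t)
    (hB : ∀ t < T, ∀ x i, |fderiv ℝ (fun x => f x t) x (Pi.single i 1)| ≤ βmax)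
    (hB₀ : ∀ t < T, ∀ x, fderiv ℝ (fun x => f x t) x (Pi.single i₀ 1) ∈ Set.Icc βmin βmax)
    (hy : IsTrajW l n T f y₀ δ u w y) (hy' : IsTrajW l n T f y₀ δ' u' w' y') :
    ∃ a b : ℕ → ℕ → ℝ,
      (∀ t < T, y (t + 1) - y' (t + 1) = ∑ j ∈ range (l + 1), a t j * (y (t - j) - y' (t - j))
        + (∑ ξ ∈ range T, b t ξ * (u ξ - u' ξ) + (w t - w' t))) ∧
      (∀ t < T, ∀ j ≤ l, |a t j| ≤ βmax) ∧ (∀ t < T, ∀ ξ, |b t ξ| ≤ βmax) ∧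
      (∀ t ξ, t < ξ → b t ξ = 0) ∧ (∀ t < T, b t t ∈ Set.Icc βmin βmax) := by
  have hmvt : ∀ t, ∃ c, t < T → y (t + 1) - y' (t + 1)
      = ∑ j, fderiv ℝ (fun x => f x t) c (Pi.single j 1) * sysArg l n (y - y') (u - u') t j
        + (w t - w' t) := by
    intro t
    by_cases ht : t < T
    · obtain ⟨c, hc⟩ :=
        exists_sub_eq_sum_fderiv_mul (hf t ht) (sysArg l n y u t) (sysArg l n y' u' t)
      refine ⟨c, fun _ => ?_⟩
      rw [hy.2 t ht, hy'.2 t ht, ← sysArg_sub, add_sub_add_comm, hc]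
      rfl
    · exact ⟨0, fun h => absurd h ht⟩
  choose c hc using hmvt
  set p : ℕ → ℕ → ℝ := fun t j =>
    if h : j < l + n + 2 then fderiv ℝ (fun x => f x t) (c t) (Pi.single ⟨j, h⟩ 1) else 0
  have hp : ∀ t < T, ∀ j, |p t j| ≤ βmax := fun t ht j => by
    simp only [p]
    split_ifs <;> simp [hB t ht, hβ]
  refine ⟨fun t j => if j ≤ t then p t j else 0,
    fun t ξ => if ξ ≤ t ∧ t - ξ ≤ n then p t (l + 1 + (t - ξ)) else 0,
    fun t ht => ?_, fun t ht j _ => ?_, fun t ht ξ => ?_, fun t ξ h => if_neg (by omega),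
    fun t ht => ?_⟩
  · rw [hc t ht, ← add_assoc]
    congr 1
    refine (sum_congr rfl fun j _ => ?_).trans (sum_mul_sysArg l n (p t) (y - y') (u - u') ht)
    simp only [p, dif_pos j.isLt]
  · dsimp only
    split_ifs <;> simp [hp t ht, hβ]
  · dsimp only
    split_ifs <;> simp [hp t ht, hβ]
  · have hi : (⟨l + 1, by omega⟩ : Fin (l + n + 2)) = i₀ := Fin.ext hi₀.symm
    simpa [p, hi] using hB₀ t ht (c t)

/-- Lemma 11 of the paper: extended dynamical linearization of system (29) in the
presence of nonrepetitive disturbances and initial shifts, with a bound `β_θ`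
depending only on `βmax`, `l` and `T`. -/
theorem stmt15 (l n T : ℕ) (βmin βmax : ℝ)
    (hβmin : 0 < βmin) (hββ : βmin ≤ βmax) :
    ∃ βθ : ℝ, 0 < βθ ∧
      ∀ f : (Fin (l + n + 2) → ℝ) → ℕ → ℝ,
        (∀ t, t < T → ContDiff ℝ 1 fun x => f x t) →
        (∀ t, t < T → ∀ x, ∀ i, |fderiv ℝ (fun x => f x t) x (Pi.single i 1)| ≤ βmax) →
        (∀ t, t < T → ∀ x,
          fderiv ℝ (fun x => f x t) x
              (Pi.single (⟨l + 1, by omega⟩ : Fin (l + n + 2)) 1)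
            ∈ Set.Icc βmin βmax) →
        ∀ (y₀ : ℝ) (δ δ' : ℝ) (u u' w w' y y' : ℕ → ℝ),
          IsTrajW l n T f y₀ δ u w y → IsTrajW l n T f y₀ δ' u' w' y' →
          ∃ (θ υ : ℕ → ℕ → ℝ) (ϑ : ℕ → ℝ),
            (∀ t, t < T →
              y (t + 1) - y' (t + 1)
                = ∑ ξ ∈ Finset.range (t + 1), θ t ξ * (u ξ - u' ξ)
                  + (w t - w' t)
                  + ∑ ξ ∈ Finset.range t, υ t ξ * (w ξ - w' ξ)
                  + ϑ t * (δ - δ')) ∧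
            (∀ t, t < T → ∀ ξ, ξ ≤ t → |θ t ξ| ≤ βθ) ∧
            (∀ t, t < T → θ t t ∈ Set.Icc βmin βmax) ∧
            (∀ t, t < T → ∀ ξ, ξ < t → |υ t ξ| ≤ βθ) ∧
            (∀ t, t < T → |ϑ t| ≤ βθ) := by
  have hβ : 0 ≤ βmax := by linarith
  set K : ℝ := ((l : ℝ) + 1) * βmax + 1
  have hK : 1 ≤ K := by simp only [K]; nlinarith
  refine ⟨(βmax + 1) * K ^ T, by positivity,
    fun f hf hB hB₀ y₀ δ δ' u u' w w' y y' hy hy' => ?_⟩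
  obtain ⟨a, b, hrec, ha, hb, hb0, hbt⟩ := hy.exists_lag_recursion rfl hβ
    (fun t ht => (hf t ht).differentiable one_ne_zero) hB hB₀ hy'
  have h0 : y 0 - y' 0 = δ - δ' := by rw [hy.1, hy'.1]; ring
  have hbound : ∀ {g : ℕ → ℝ} {c M : ℝ}, M ≤ βmax + 1 → (∀ s < T, |g s| ≤ M) → |c| ≤ M →
      ∀ t < T, |lagRec l a g c (t + 1)| ≤ (βmax + 1) * K ^ T := fun hM hg hc t ht =>
    (lagRec.abs_le hβ ha hg hc (t + 1) ht).trans
      (mul_le_mul hM (pow_le_pow_right₀ hK ht) (by positivity) (by positivity))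
  refine ⟨fun t ξ => lagRec l a (b · ξ) 0 (t + 1),
    fun t ξ => lagRec l a (fun s => if s = ξ then 1 else 0) 0 (t + 1),
    fun t => lagRec l a 0 1 (t + 1), fun t ht => ?_, fun t ht ξ _ => ?_, fun t ht => ?_,
    fun t ht ξ _ => ?_, fun t ht => ?_⟩
  · exact lagRec.succ_superposition_of_causal (X := fun s => y s - y' s) h0 hrec hb0 ht
  · exact hbound (by linarith) (fun s hs => hb s hs ξ) (by simpa using hβ) t ht
  · dsimp only
    rw [lagRec.succ_eq_forcing fun s hs => hb0 s t hs]
    exact hbt t ht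
  · exact hbound (M := 1) (by linarith) (fun s _ => by split_ifs <;> simp) (by simp) t ht
  · exact hbound (M := 1) (by linarith) (fun s _ => by simp) (by simp) t ht
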